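/- With the lower-bound construction below, fix i ∈ [n] and an integer s ≥ 1, and define the distribution D_i^s on [d]^s by D_i^s(x) = E_{a,b}[∏_{t=1}^s P_{i,a,b}(x_t)], where a and b are drawn uniformly and independently (each a_v uniform on T_{2i−1}^v and each b_v uniform on T_{2i}^v). Then for every tuple x = (x_1,…,x_s) ∈ [d]^s whose coordinates lie in pairwise distinct blocks T_u^v (no two coordinates in the same block), D_i^s(x) = 1/d^s; in particular this value does not depend on i. (Key coincidence property in the proof of Theorem 3.6.) -/
import Mathlib


/-- The block `T_u^v` (0-indexed: `u ∈ {0,…,2n−1}`, `v ∈ {0,…,k−1}`): the `ℓ`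
consecutive domain elements `{u·kℓ + v·ℓ, …, u·kℓ + (v+1)·ℓ − 1}` of `{0,…,d−1}`. -/
def Tblk (k ℓ u v : ℕ) : Finset ℕ :=
  Finset.Ico (u * (k * ℓ) + v * ℓ) (u * (k * ℓ) + (v + 1) * ℓ)

/-- The hypothesis `H_i` (0-indexed `i ∈ {0,…,n−1}`) of the lower-bound construction:
mass `(1+β)/d` on `T_{2i}`, mass `(1−β)/d` on `T_{2i+1}`, and `1/d` elsewhere, where
`d = 2nkℓ` and `β = 1/(ℓ−1)`. -/
noncomputable def Hhyp (n k ℓ i x : ℕ) : ℝ :=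
  if 2 * i * (k * ℓ) ≤ x ∧ x < (2 * i + 1) * (k * ℓ) then
    (1 + 1 / ((ℓ : ℝ) - 1)) / (2 * n * k * ℓ)
  else if (2 * i + 1) * (k * ℓ) ≤ x ∧ x < (2 * i + 2) * (k * ℓ) then
    (1 - 1 / ((ℓ : ℝ) - 1)) / (2 * n * k * ℓ)
  else 1 / (2 * (n : ℝ) * k * ℓ)

/-- The true distribution `P_{i,a,b}` of the lower-bound construction, where for each
`v < k`, `a v ∈ T_{2i}^v` is the zero-mass element and `b v ∈ T_{2i+1}^v` is the
element of mass `2/d`; elsewhere `P_{i,a,b}` agrees with `H_i`. -/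
noncomputable def Pdist (n k ℓ i : ℕ) (a b : Fin k → ℕ) (x : ℕ) : ℝ :=
  if ∃ v : Fin k, a v = x then 0
  else if ∃ v : Fin k, b v = x then 2 / (2 * (n : ℝ) * k * ℓ)
  else Hhyp n k ℓ i x

section helpers

lemma nat_lt_div_succ_mul (y m : ℕ) (hm : 0 < m) : y < (y/m+1)*m := by
  have h := Nat.div_add_mod y m
  have h2 := Nat.mod_lt y hm
  nlinarith [h, h2]

lemma mem_Tblk_div {k ℓ u v y : ℕ} (h : y ∈ Tblk k ℓ u v) : y / ℓ = u * k + v := by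
  simp only [Tblk, Finset.mem_Ico] at h
  refine Nat.div_eq_of_lt_le ?_ ?_
  · calc (u*k+v)*ℓ = u*(k*ℓ)+v*ℓ := by ring
    _ ≤ y := h.1
  · calc y < u*(k*ℓ)+(v+1)*ℓ := h.2
    _ = (u*k+v+1)*ℓ := by ring

lemma mem_Tblk_self {k ℓ : ℕ} (y : ℕ) (hℓ : 0 < ℓ) :
    y ∈ Tblk k ℓ (y / ℓ / k) (y / ℓ % k) := by
  simp only [Tblk, Finset.mem_Ico]
  have h : k * (y/ℓ/k) + y/ℓ%k = y/ℓ := Nat.div_add_mod (y/ℓ) k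
  have h1 : (y/ℓ)*ℓ ≤ y := Nat.div_mul_le_self y ℓ
  have h2 : y < (y/ℓ+1)*ℓ := nat_lt_div_succ_mul y ℓ hℓ
  constructor
  · nlinarith [h, h1]
  · nlinarith [h, h2]

lemma uv_of_mem_Tblk {k ℓ u v y : ℕ} (hv : v < k) (h : y ∈ Tblk k ℓ u v) :
    y / ℓ / k = u ∧ y / ℓ % k = v := by
  have hd := mem_Tblk_div h
  have hk0 : 0 < k := Nat.lt_of_le_of_lt (Nat.zero_le v) hv
  rw [hd]
  constructor
  · rw [Nat.add_comm, Nat.add_mul_div_right _ _ hk0, Nat.div_eq_of_lt hv, Nat.zero_add]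
  · rw [Nat.add_comm, Nat.add_mul_mod_self_right, Nat.mod_eq_of_lt hv]

lemma Ico_div_iff {y m c : ℕ} (hm : 0 < m) : (c * m ≤ y ∧ y < (c+1)*m) ↔ y / m = c := by
  constructor
  · rintro ⟨h1, h2⟩; exact Nat.div_eq_of_lt_le h1 h2
  · rintro rfl
    exact ⟨Nat.div_mul_le_self y m, nat_lt_div_succ_mul y m hm⟩

lemma Tblk_card (k ℓ u v : ℕ) : (Tblk k ℓ u v).card = ℓ := by
  have h : u*(k*ℓ)+(v+1)*ℓ = (u*(k*ℓ)+v*ℓ) + ℓ := by ring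
  simp only [Tblk, Nat.card_Ico, h]
  omega

lemma sum_pi_block {ι : Type*} [DecidableEq ι] (k ℓ u : ℕ) (hℓ : 2 ≤ ℓ)
    (S : Finset ι) (x : ι → ℕ) (vt : ι → Fin k)
    (hxS : ∀ t ∈ S, x t ∈ Tblk k ℓ u (vt t))
    (hinj : ∀ t ∈ S, ∀ t' ∈ S, vt t = vt t' → t = t') (c r : ℝ) :
    ∑ a ∈ Fintype.piFinset (fun v : Fin k => Tblk k ℓ u v),
      ∏ t ∈ S, (if a (vt t) = x t then c else r)
    = (c + ((ℓ:ℝ) - 1) * r) ^ S.card * (ℓ:ℝ) ^ (k - S.card) := by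
  classical
  set C : ℝ := c + ((ℓ:ℝ) - 1) * r with hC
  have step1 : ∀ a : Fin k → ℕ, (∏ t ∈ S, if a (vt t) = x t then c else r)
      = ∏ v : Fin k, ∏ t ∈ S.filter (vt · = v), (if a v = x t then c else r) := by
    intro a
    symm
    rw [← Finset.prod_fiberwise_of_maps_to (fun t _ => Finset.mem_univ (vt t))
      (fun t => if a (vt t) = x t then c else r)]
    exact Finset.prod_congr rfl fun v _ => Finset.prod_congr rfl fun t ht => by
      rw [(Finset.mem_filter.mp ht).2]
  rw [Finset.sum_congr rfl (fun a _ => step1 a),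
    ← Finset.prod_univ_sum (fun v : Fin k => Tblk k ℓ u v)
      (fun v y => ∏ t ∈ S.filter (vt · = v), if y = x t then c else r)]
  have hfibcard : ∀ v : Fin k, (S.filter (vt · = v)).card ≤ 1 := by
    intro v
    refine Finset.card_le_one.mpr fun t ht t' ht' => ?_
    obtain ⟨htS, htv⟩ := Finset.mem_filter.mp ht
    obtain ⟨htS', htv'⟩ := Finset.mem_filter.mp ht'
    exact hinj t htS t' htS' (htv.trans htv'.symm)
  have hval : ∀ v : Fin k,
      (∑ y ∈ Tblk k ℓ u v, ∏ t ∈ S.filter (vt · = v), if y = x t then c else r)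
      = if (S.filter (vt · = v)).Nonempty then C else (ℓ:ℝ) := by
    intro v
    rcases Finset.eq_empty_or_nonempty (S.filter (vt · = v)) with he | hne
    · rw [if_neg (by simp [he])]
      simp [he, Tblk_card]
    · rw [if_pos hne]
      obtain ⟨t₀, ht₀⟩ := Finset.card_eq_one.mp (le_antisymm (hfibcard v) hne.card_pos)
      have ht₀mem : t₀ ∈ S.filter (vt · = v) := by rw [ht₀]; exact Finset.mem_singleton_self t₀
      obtain ⟨ht₀S, ht₀v⟩ := Finset.mem_filter.mp ht₀mem
      have hx₀ : x t₀ ∈ Tblk k ℓ u v := by rw [← ht₀v]; exact hxS t₀ ht₀S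
      rw [ht₀]
      simp only [Finset.prod_singleton]
      rw [← Finset.add_sum_erase _ _ hx₀, if_pos rfl]
      have herase : ∀ y ∈ (Tblk k ℓ u v).erase (x t₀),
          (if y = x t₀ then c else r) = r := by
        intro y hy
        rw [if_neg (Finset.ne_of_mem_erase hy)]
      rw [Finset.sum_congr rfl herase, Finset.sum_const,
        Finset.card_erase_of_mem hx₀, Tblk_card, nsmul_eq_mul, hC,
        Nat.cast_sub (by omega : 1 ≤ ℓ)]
      push_cast
      ring
  rw [Finset.prod_congr rfl (fun v _ => hval v)]
  rw [← Finset.prod_filter_mul_prod_filter_not Finset.univ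
    (fun v => (S.filter (vt · = v)).Nonempty)]
  have h1 : ∀ v ∈ Finset.univ.filter (fun v => (S.filter (vt · = v)).Nonempty),
      (if (S.filter (vt · = v)).Nonempty then C else (ℓ:ℝ)) = C := fun v hv => by
    rw [if_pos (Finset.mem_filter.mp hv).2]
  have h2 : ∀ v ∈ Finset.univ.filter (fun v => ¬ (S.filter (vt · = v)).Nonempty),
      (if (S.filter (vt · = v)).Nonempty then C else (ℓ:ℝ)) = (ℓ:ℝ) := fun v hv => by
    rw [if_neg (Finset.mem_filter.mp hv).2]
  rw [Finset.prod_congr rfl h1, Finset.prod_congr rfl h2, Finset.prod_const, Finset.prod_const]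
  have himg : Finset.univ.filter (fun v => (S.filter (vt · = v)).Nonempty) = S.image vt := by
    ext v
    simp only [Finset.mem_filter, Finset.mem_univ, true_and, Finset.mem_image,
      Finset.filter_nonempty_iff]
  have hcard1 : (Finset.univ.filter (fun v => (S.filter (vt · = v)).Nonempty)).card = S.card := by
    rw [himg]; exact Finset.card_image_of_injOn fun t ht t' ht' h => hinj t ht t' ht' h
  have hcard2 : (Finset.univ.filter (fun v => ¬ (S.filter (vt · = v)).Nonempty)).card
      = k - S.card := by
    have := Finset.card_filter_add_card_filter_not
      (s := (Finset.univ : Finset (Fin k))) (p := fun v => (S.filter (vt · = v)).Nonempty)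
    rw [Finset.card_univ, Fintype.card_fin] at this
    omega
  rw [hcard1, hcard2]

lemma Pdist_eq (n k ℓ i : ℕ) (hk : 0 < k) (hℓ : 0 < ℓ) (a b : Fin k → ℕ)
    (ha : ∀ v : Fin k, a v ∈ Tblk k ℓ (2*i) v)
    (hb : ∀ v : Fin k, b v ∈ Tblk k ℓ (2*i+1) v) (y : ℕ) :
    Pdist n k ℓ i a b y =
      if y / ℓ / k = 2*i then
        (if a ⟨y/ℓ%k, Nat.mod_lt _ hk⟩ = y then 0
         else (1 + 1/((ℓ:ℝ)-1)) / (2*(n:ℝ)*k*ℓ))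
      else if y / ℓ / k = 2*i+1 then
        (if b ⟨y/ℓ%k, Nat.mod_lt _ hk⟩ = y then 2/(2*(n:ℝ)*k*ℓ)
         else (1 - 1/((ℓ:ℝ)-1)) / (2*(n:ℝ)*k*ℓ))
      else 1/(2*(n:ℝ)*k*ℓ) := by
  have hmul : 0 < k * ℓ := Nat.mul_pos hk hℓ
  have hdd : y / ℓ / k = y / (k * ℓ) := by
    rw [Nat.div_div_eq_div_mul, Nat.mul_comm]
  have keyA : (∃ v : Fin k, a v = y) ↔ (y/ℓ/k = 2*i ∧ a ⟨y/ℓ%k, Nat.mod_lt _ hk⟩ = y) := by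
    constructor
    · rintro ⟨v, hv⟩
      obtain ⟨h1, h2⟩ := uv_of_mem_Tblk v.isLt (hv ▸ ha v)
      refine ⟨h1, ?_⟩
      have : (⟨y/ℓ%k, Nat.mod_lt _ hk⟩ : Fin k) = v := Fin.ext h2
      rw [this]; exact hv
    · rintro ⟨-, h2⟩; exact ⟨_, h2⟩
  have keyB : (∃ v : Fin k, b v = y) ↔ (y/ℓ/k = 2*i+1 ∧ b ⟨y/ℓ%k, Nat.mod_lt _ hk⟩ = y) := by
    constructor
    · rintro ⟨v, hv⟩
      obtain ⟨h1, h2⟩ := uv_of_mem_Tblk v.isLt (hv ▸ hb v)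
      refine ⟨h1, ?_⟩
      have : (⟨y/ℓ%k, Nat.mod_lt _ hk⟩ : Fin k) = v := Fin.ext h2
      rw [this]; exact hv
    · rintro ⟨-, h2⟩; exact ⟨_, h2⟩
  have hH1 : (2*i*(k*ℓ) ≤ y ∧ y < (2*i+1)*(k*ℓ)) ↔ y/ℓ/k = 2*i := by
    rw [hdd]; exact Ico_div_iff hmul
  have hH2 : ((2*i+1)*(k*ℓ) ≤ y ∧ y < (2*i+2)*(k*ℓ)) ↔ y/ℓ/k = 2*i+1 := by
    rw [hdd]; exact Ico_div_iff hmul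
  by_cases h1 : y/ℓ/k = 2*i
  · rw [if_pos h1]
    by_cases h2 : a ⟨y/ℓ%k, Nat.mod_lt _ hk⟩ = y
    · rw [if_pos h2, Pdist, if_pos (keyA.mpr ⟨h1, h2⟩)]
    · rw [if_neg h2, Pdist, if_neg (fun h => h2 (keyA.mp h).2),
        if_neg (fun h => by have := (keyB.mp h).1; omega), Hhyp, if_pos (hH1.mpr h1)]
  · rw [if_neg h1]
    have hNA : ¬∃ v : Fin k, a v = y := fun h => h1 (keyA.mp h).1
    by_cases h2 : y/ℓ/k = 2*i+1
    · rw [if_pos h2]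
      by_cases h3 : b ⟨y/ℓ%k, Nat.mod_lt _ hk⟩ = y
      · rw [if_pos h3, Pdist, if_neg hNA, if_pos (keyB.mpr ⟨h2, h3⟩)]
      · rw [if_neg h3, Pdist, if_neg hNA, if_neg (fun h => h3 (keyB.mp h).2), Hhyp,
          if_neg (fun h => h1 (hH1.mp h)), if_pos (hH2.mpr h2)]
    · rw [if_neg h2, Pdist, if_neg hNA, if_neg (fun h => h2 (keyB.mp h).1), Hhyp,
          if_neg (fun h => h1 (hH1.mp h)), if_neg (fun h => h2 (hH2.mp h))]

lemma pow_arith (L E : ℝ) (hL : L ≠ 0) (cA cB cC k s : ℕ)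
    (hA : cA ≤ k) (hB : cB ≤ k) (hsum : cA + cB + cC = s) :
    1/L^(2*k) * ((L/E)^cA * L^(k-cA) * ((L/E)^cB * L^(k-cB) * (1/E)^cC)) = 1/E^s := by
  have eL : L^cA * L^(k-cA) * (L^cB * L^(k-cB)) = L^(2*k) := by
    rw [← pow_add, ← pow_add, ← pow_add]; congr 1; omega
  have eE : (1/E)^cA * ((1/E)^cB * (1/E)^cC) = (1/E)^s := by
    rw [← pow_add, ← pow_add]; congr 1; omega
  calc 1/L^(2*k) * ((L/E)^cA * L^(k-cA) * ((L/E)^cB * L^(k-cB) * (1/E)^cC))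
      = 1/L^(2*k) * ((L^cA * L^(k-cA) * (L^cB * L^(k-cB))) *
          ((1/E)^cA * ((1/E)^cB * (1/E)^cC))) := by
        rw [div_eq_mul_one_div L E, mul_pow, mul_pow]; ring
    _ = 1/L^(2*k) * (L^(2*k) * (1/E)^s) := by rw [eL, eE]
    _ = (1/E)^s := by field_simp
    _ = 1/E^s := by rw [div_pow, one_pow]

end helpers

/-- **Key coincidence property in the proof of Theorem 3.6.**
For `D_i^s(x) = E_{a,b}[∏_t P_{i,a,b}(x_t)] = (1/ℓ^{2k})·Σ_{a,b} ∏_t P_{i,a,b}(x_t)`,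
where `a, b` range uniformly over `∏_v T_{2i}^v` and `∏_v T_{2i+1}^v`: for every tuple
`x ∈ [d]^s` whose coordinates lie in pairwise distinct blocks `T_u^v`, we have
`D_i^s(x) = 1/d^s` (in particular this value does not depend on `i`). -/
theorem lower_bound_coincidence
    (n k ℓ : ℕ) (hn : 1 ≤ n) (hk : 1 ≤ k) (hℓ : 2 ≤ ℓ)
    (i : ℕ) (hi : i < n) (s : ℕ) (hs : 1 ≤ s)
    (x : Fin s → ℕ) (hx : ∀ t, x t < 2 * n * k * ℓ)
    (hdistinct : ∀ t t' : Fin s, t ≠ t' → ∀ u v : ℕ, u < 2 * n → v < k →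
      ¬(x t ∈ Tblk k ℓ u v ∧ x t' ∈ Tblk k ℓ u v)) :
    (1 / (ℓ : ℝ) ^ (2 * k)) *
      ∑ a ∈ Fintype.piFinset (fun v : Fin k => Tblk k ℓ (2 * i) v),
        ∑ b ∈ Fintype.piFinset (fun v : Fin k => Tblk k ℓ (2 * i + 1) v),
          ∏ t, Pdist n k ℓ i a b (x t)
      = 1 / (2 * (n : ℝ) * k * ℓ) ^ s := by
  classical
  have hk0 : 0 < k := hk
  have hl0 : 0 < ℓ := by omega
  set D : ℝ := 2 * (n:ℝ) * k * ℓ with hD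
  set rA : ℝ := (1 + 1/((ℓ:ℝ)-1)) / D with hrA
  set cB : ℝ := 2 / D with hcB
  set rB : ℝ := (1 - 1/((ℓ:ℝ)-1)) / D with hrB
  set vt : Fin s → Fin k := fun t => ⟨x t / ℓ % k, Nat.mod_lt _ hk0⟩ with hvt
  set SA : Finset (Fin s) := Finset.univ.filter (fun t => x t / ℓ / k = 2*i) with hSA
  set SR : Finset (Fin s) := Finset.univ.filter (fun t => ¬ x t / ℓ / k = 2*i) with hSR
  set SB : Finset (Fin s) := SR.filter (fun t => x t / ℓ / k = 2*i+1) with hSB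
  set SC : Finset (Fin s) := SR.filter (fun t => ¬ x t / ℓ / k = 2*i+1) with hSC
  -- injectivity
  have hinj : ∀ (u0 : ℕ), u0 < 2*n → ∀ t t' : Fin s, x t / ℓ / k = u0 → x t' / ℓ / k = u0 →
      vt t = vt t' → t = t' := by
    intro u0 hu0 t t' ht ht' hv
    by_contra hne
    apply hdistinct t t' hne u0 (x t / ℓ % k) hu0 (Nat.mod_lt _ hk0)
    constructor
    · have h := mem_Tblk_self (k := k) (x t) hl0; rwa [ht] at h
    · have h := mem_Tblk_self (k := k) (x t') hl0
      have hvv : x t' / ℓ % k = x t / ℓ % k := by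
        have h2 := congrArg Fin.val hv
        simp only [hvt] at h2
        exact h2.symm
      rwa [ht', hvv] at h
  have hinjA : ∀ t ∈ SA, ∀ t' ∈ SA, vt t = vt t' → t = t' := by
    intro t ht t' ht' hv
    exact hinj (2*i) (by omega) t t' (Finset.mem_filter.mp ht).2 (Finset.mem_filter.mp ht').2 hv
  have hinjB : ∀ t ∈ SB, ∀ t' ∈ SB, vt t = vt t' → t = t' := by
    intro t ht t' ht' hv
    exact hinj (2*i+1) (by omega) t t' (Finset.mem_filter.mp ht).2 (Finset.mem_filter.mp ht').2 hv
  have hxA : ∀ t ∈ SA, x t ∈ Tblk k ℓ (2*i) (vt t) := by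
    intro t ht
    have h := mem_Tblk_self (k := k) (x t) hl0
    rwa [(Finset.mem_filter.mp ht).2] at h
  have hxB : ∀ t ∈ SB, x t ∈ Tblk k ℓ (2*i+1) (vt t) := by
    intro t ht
    have h := mem_Tblk_self (k := k) (x t) hl0
    rwa [(Finset.mem_filter.mp ht).2] at h
  -- rewrite the product
  have key : ∀ a ∈ Fintype.piFinset (fun v : Fin k => Tblk k ℓ (2 * i) v),
      ∀ b ∈ Fintype.piFinset (fun v : Fin k => Tblk k ℓ (2 * i + 1) v),
      (∏ t, Pdist n k ℓ i a b (x t)) =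
      (∏ t ∈ SA, if a (vt t) = x t then (0:ℝ) else rA) *
      ((∏ t ∈ SB, if b (vt t) = x t then cB else rB) * (1/D)^(SC.card)) := by
    intro a ha b hb
    have ha' : ∀ v : Fin k, a v ∈ Tblk k ℓ (2*i) v := fun v => Fintype.mem_piFinset.mp ha v
    have hb' : ∀ v : Fin k, b v ∈ Tblk k ℓ (2*i+1) v := fun v => Fintype.mem_piFinset.mp hb v
    have hP := Pdist_eq n k ℓ i hk0 hl0 a b ha' hb'
    rw [← Finset.prod_filter_mul_prod_filter_not Finset.univ (fun t => x t / ℓ / k = 2*i)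
        (fun t => Pdist n k ℓ i a b (x t)),
      ← Finset.prod_filter_mul_prod_filter_not SR (fun t => x t / ℓ / k = 2*i+1)
        (fun t => Pdist n k ℓ i a b (x t))]
    congr 1
    · refine Finset.prod_congr rfl fun t ht => ?_
      rw [hP (x t), if_pos (Finset.mem_filter.mp ht).2]
    congr 1
    · refine Finset.prod_congr rfl fun t ht => ?_
      obtain ⟨htR, ht2⟩ := Finset.mem_filter.mp ht
      rw [hP (x t), if_neg (Finset.mem_filter.mp htR).2, if_pos ht2]
    · rw [← Finset.prod_const (1/D : ℝ)]
      refine Finset.prod_congr rfl fun t ht => ?_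
      obtain ⟨htR, ht2⟩ := Finset.mem_filter.mp ht
      rw [hP (x t), if_neg (Finset.mem_filter.mp htR).2, if_neg ht2]
  rw [Finset.sum_congr rfl (fun a ha => Finset.sum_congr rfl (fun b hb => key a ha b hb)),
    ← Finset.sum_mul_sum (Fintype.piFinset (fun v : Fin k => Tblk k ℓ (2 * i) v))
      (Fintype.piFinset (fun v : Fin k => Tblk k ℓ (2 * i + 1) v))
      (fun a => ∏ t ∈ SA, if a (vt t) = x t then (0:ℝ) else rA)
      (fun b => (∏ t ∈ SB, if b (vt t) = x t then cB else rB) * (1/D)^(SC.card)),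
    ← Finset.sum_mul,
    sum_pi_block k ℓ (2*i) hℓ SA x vt hxA hinjA 0 rA,
    sum_pi_block k ℓ (2*i+1) hℓ SB x vt hxB hinjB cB rB]
  have hD0 : (0:ℝ) < D := by
    rw [hD]
    have h1 : (0:ℝ) < (n:ℝ) := by exact_mod_cast Nat.lt_of_lt_of_le Nat.zero_lt_one hn
    have h2 : (0:ℝ) < (k:ℝ) := by exact_mod_cast hk0
    have h3 : (0:ℝ) < (ℓ:ℝ) := by exact_mod_cast hl0
    positivity
  have hDne : D ≠ 0 := ne_of_gt hD0
  have hl2 : (2:ℝ) ≤ (ℓ:ℝ) := by exact_mod_cast hℓ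
  have hlne : ((ℓ:ℝ) - 1) ≠ 0 := by intro h; linarith
  have hlne0 : (ℓ:ℝ) ≠ 0 := by intro h; linarith
  have hC1 : (0:ℝ) + ((ℓ:ℝ)-1) * rA = (ℓ:ℝ)/D := by
    rw [hrA]; field_simp; ring
  have hC2 : cB + ((ℓ:ℝ)-1) * rB = (ℓ:ℝ)/D := by
    rw [hcB, hrB]; field_simp; ring
  have hcAk : SA.card ≤ k := by
    have h := Finset.card_le_card_of_injOn vt (fun t _ => Finset.mem_univ (vt t)) hinjA
    simpa using h
  have hcBk : SB.card ≤ k := by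
    have h := Finset.card_le_card_of_injOn vt (fun t _ => Finset.mem_univ (vt t)) hinjB
    simpa using h
  have hcards : SA.card + SB.card + SC.card = s := by
    have e1 := Finset.card_filter_add_card_filter_not
      (s := (Finset.univ : Finset (Fin s))) (p := fun t => x t / ℓ / k = 2*i)
    have e2 := Finset.card_filter_add_card_filter_not
      (s := SR) (p := fun t => x t / ℓ / k = 2*i+1)
    simp only [Finset.card_univ, Fintype.card_fin] at e1
    rw [← hSA, ← hSR] at e1
    rw [← hSB, ← hSC] at e2
    omega
  rw [hC1, hC2]
  exact pow_arith (ℓ:ℝ) D hlne0 SA.card SB.card SC.card k s hcAk hcBk hcards
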